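/- arXiv:2303.12230 — 4 statements merged into one kernel-verified Lean document; each statement's English description precedes it below -/
import Mathlib

section
/- If T is a bounded linear operator on a Banach space X and there exists a bounded subset A of X whose orbit under T (i.e. {T^n x : n ∈ ℕ, x ∈ A}) is weakly dense in X, then for every non-zero continuous linear functional x* on X, the orbit of x* under the adjoint T* is unbounded. -/
/-!
If `‖x* ∘ Tⁿ‖ ≤ M` for all `n` and `A` is bounded by `C`, then `|x*|` is bounded by `M C` on the
orbit of `A`. The set where `|x*| ≤ M C` is weakly closed, so by weak density `x*` is bounded on
all of `X`, and a bounded linear functional vanishes.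
-/

theorem LinearMap.eq_zero_of_forall_norm_le {𝕜 E F : Type*} [NontriviallyNormedField 𝕜]
    [AddCommGroup E] [Module 𝕜 E] [NormedAddCommGroup F] [NormedSpace 𝕜 F]
    (f : E →ₗ[𝕜] F) {K : ℝ} (hK : ∀ x, ‖f x‖ ≤ K) : f = 0 := by
  ext x
  by_contra hx
  have hfx : 0 < ‖f x‖ := norm_pos_iff.mpr (by simpa using hx)
  obtain ⟨c, hc⟩ := NormedField.exists_lt_norm 𝕜 (K / ‖f x‖)
  have : K < ‖f (c • x)‖ := by
    rw [map_smul, norm_smul]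
    exact (div_lt_iff₀ hfx).mp hc
  exact this.not_ge (hK _)

theorem norm_apply_le_of_dense_toWeakSpace_image {𝕜 E : Type*} [NormedField 𝕜]
    [SeminormedAddCommGroup E] [NormedSpace 𝕜 E] {S : Set E}
    (hS : Dense (toWeakSpace 𝕜 E '' S)) (f : E →L[𝕜] 𝕜) {K : ℝ} (hK : ∀ x ∈ S, ‖f x‖ ≤ K)
    (x : E) : ‖f x‖ ≤ K :=
  hS.induction (P := fun w => ‖(topDualPairing 𝕜 E).flip w f‖ ≤ K)
    (by rintro _ ⟨y, hy, rfl⟩; exact hK y hy)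
    (isClosed_le (WeakBilin.eval_continuous _ f).norm continuous_const)
    (toWeakSpace 𝕜 E x)

theorem stmt0_general {X : Type*} [NormedAddCommGroup X] [NormedSpace ℂ X]
    (T : X →L[ℂ] X) (A : Set X) (hA : Bornology.IsBounded A)
    (hdense : Dense (toWeakSpace ℂ X '' {z : X | ∃ (n : ℕ) (a : X), a ∈ A ∧ z = (T ^ n) a})) :
    ∀ f : X →L[ℂ] ℂ, f ≠ 0 → ¬ ∃ M : ℝ, ∀ n : ℕ, ‖f.comp (T ^ n)‖ ≤ M := by
  rintro f hf ⟨M, hM⟩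
  obtain ⟨C, hC⟩ := isBounded_iff_forall_norm_le.mp hA
  have hM0 : 0 ≤ M := (norm_nonneg _).trans (hM 0)
  have horbit : ∀ z ∈ {z : X | ∃ (n : ℕ) (a : X), a ∈ A ∧ z = (T ^ n) a}, ‖f z‖ ≤ M * C := by
    rintro _ ⟨n, a, ha, rfl⟩
    calc ‖f ((T ^ n) a)‖ ≤ ‖f.comp (T ^ n)‖ * ‖a‖ := (f.comp (T ^ n)).le_opNorm a
      _ ≤ M * C := mul_le_mul (hM n) (hC a ha) (norm_nonneg _) hM0
  have hbounded := norm_apply_le_of_dense_toWeakSpace_image hdense f horbit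
  exact hf (ContinuousLinearMap.coe_injective
    ((f : X →ₗ[ℂ] ℂ).eq_zero_of_forall_norm_le hbounded))

/-- If `T` is a bounded operator on a complex Banach space `X` and some bounded set `A`
has weakly dense orbit under `T`, then the orbit of every non-zero continuous linear
functional under the Banach-space adjoint of `T` is unbounded. -/
theorem stmt0 {X : Type*} [NormedAddCommGroup X] [NormedSpace ℂ X] [CompleteSpace X]
    (T : X →L[ℂ] X) (A : Set X) (hA : Bornology.IsBounded A)
    (hdense : Dense (toWeakSpace ℂ X '' {z : X | ∃ (n : ℕ) (a : X), a ∈ A ∧ z = (T ^ n) a})) :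
    ∀ f : X →L[ℂ] ℂ, f ≠ 0 → ¬ ∃ M : ℝ, ∀ n : ℕ, ‖f.comp (T ^ n)‖ ≤ M :=
  stmt0_general T A hA hdense
end

section
/- Let ω = (ω_n) be a sequence of positive weights on ℕ with sup_n ω_n/ω_{n+1} < ∞, and let B be the backward shift on ℓ^p(ℕ, ω) for 1 ≤ p < ∞. If there exists a bounded subset C of ℓ^p(ℕ, ω) such that the orbit of C under B has a non-zero weak limit point, then there exists a strictly increasing sequence (n_k) of positive integers with sup_k ω_{n_k} < ∞. -/
/-!
Each coordinate `x ↦ x j` is a continuous functional on `ℓ^p(ω)`, with `ω j * ‖x j‖ ≤ ‖x‖`.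
Testing the weak convergence `B^{n_k} x_k ⇀ y` against the coordinate `j` at which `y j ≠ 0`
gives `x_k (j + n_k) → y j`, so `‖x_k (j + n_k)‖ ≥ ‖y j‖ / 2` for large `k`; since `C` is
bounded, `ω (j + n_k) ≤ 2 sup_C ‖·‖ / ‖y j‖` along a tail, and `j + n_k` is strictly increasing.
-/

open MeasureTheory Filter Topology
open scoped ENNReal

noncomputable section

/-- The weighted measure on the index set `I` giving the point `k` mass `(ω k) ^ p`,
so that `Lp ℂ p (wMeasure p ω)` is the weighted sequence space `ℓ^p(I, ω)`. -/
def wMeasure {I : Type*} [MeasurableSpace I] (p : ENNReal) (ω : I → ℝ) : Measure I :=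
  Measure.sum (fun k => ENNReal.ofReal ((ω k) ^ p.toReal) • Measure.dirac k)

namespace WeightedLp

variable {I E 𝕜 : Type*} [MeasurableSpace I] [MeasurableSingletonClass I]
  [NormedAddCommGroup E] {p : ℝ≥0∞} {ω : I → ℝ}

lemma wMeasure_singleton_pos (hω : ∀ k, 0 < ω k) (j : I) : 0 < wMeasure p ω {j} := by
  refine lt_of_lt_of_le ?_ (Measure.le_sum _ j {j})
  simpa using Real.rpow_pos_of_pos (hω j) _

lemma eq_of_ae_eq {α : Type*} (hω : ∀ k, 0 < ω k) {f g : I → α}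
    (h : f =ᵐ[wMeasure p ω] g) : f = g := by
  funext j
  by_contra hne
  exact (wMeasure_singleton_pos hω j).ne' (measure_mono_null (by simpa using hne) h)

lemma exists_apply_ne_zero (hω : ∀ k, 0 < ω k) {y : Lp E p (wMeasure p ω)} (hy : y ≠ 0) :
    ∃ j, y j ≠ 0 := by
  by_contra! h
  refine hy (Lp.ext ?_)
  rw [eq_of_ae_eq hω (Lp.coeFn_zero E p _)]
  exact Eventually.of_forall h

lemma ofReal_mul_enorm_le_eLpNorm (hp₀ : p ≠ 0) (hp : p ≠ ∞) (hω : ∀ k, 0 < ω k)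
    (f : I → E) (j : I) : ENNReal.ofReal (ω j) * ‖f j‖ₑ ≤ eLpNorm f p (wMeasure p ω) := by
  have hr : p.toReal ≠ 0 := (ENNReal.toReal_pos hp₀ hp).ne'
  calc ENNReal.ofReal (ω j) * ‖f j‖ₑ
      = eLpNorm f p (ENNReal.ofReal ((ω j) ^ p.toReal) • Measure.dirac j) := by
        rw [eLpNorm_smul_measure_of_ne_top hp, eLpNorm_dirac f j hp₀, smul_eq_mul,
          ENNReal.ofReal_rpow_of_pos (Real.rpow_pos_of_pos (hω j) _), one_div,
          ENNReal.toReal_inv, ← Real.rpow_mul (hω j).le, mul_inv_cancel₀ hr, Real.rpow_one]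
    _ ≤ eLpNorm f p (wMeasure p ω) := eLpNorm_mono_measure f (Measure.le_sum _ j)

variable [Fact (1 ≤ p)]

lemma mul_norm_apply_le_norm (hp : p ≠ ∞) (hω : ∀ k, 0 < ω k)
    (x : Lp E p (wMeasure p ω)) (j : I) : ω j * ‖x j‖ ≤ ‖x‖ := by
  have hp₀ : p ≠ 0 := (zero_lt_one.trans_le Fact.out).ne'
  have h := ENNReal.toReal_mono (Lp.eLpNorm_lt_top x).ne
    (ofReal_mul_enorm_le_eLpNorm hp₀ hp hω x j)
  rwa [ENNReal.toReal_mul, ENNReal.toReal_ofReal (hω j).le, toReal_enorm, ← Lp.norm_def] at h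

lemma weight_le_of_le_norm_apply (hp : p ≠ ∞) (hω : ∀ k, 0 < ω k)
    {x : Lp E p (wMeasure p ω)} {j : I} {c R : ℝ} (hc : 0 < c) (hcx : c ≤ ‖x j‖)
    (hxR : ‖x‖ ≤ R) : ω j ≤ R / c := by
  rw [le_div_iff₀ hc]
  calc ω j * c ≤ ω j * ‖x j‖ := mul_le_mul_of_nonneg_left hcx (hω j).le
    _ ≤ R := (mul_norm_apply_le_norm hp hω x j).trans hxR

variable [NormedField 𝕜] [NormedSpace 𝕜 E]

def evalCLM (hp : p ≠ ∞) (hω : ∀ k, 0 < ω k) (j : I) : Lp E p (wMeasure p ω) →L[𝕜] E :=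
  LinearMap.mkContinuous
    { toFun := fun x => x j
      map_add' := fun x x' => congrFun (eq_of_ae_eq hω (Lp.coeFn_add x x')) j
      map_smul' := fun c x => congrFun (eq_of_ae_eq hω (Lp.coeFn_smul c x)) j }
    (ω j)⁻¹
    fun x => by
      rw [inv_mul_eq_div, le_div_iff₀' (hω j)]
      exact mul_norm_apply_le_norm hp hω x j

@[simp]
lemma evalCLM_apply (hp : p ≠ ∞) (hω : ∀ k, 0 < ω k) (j : I) (x : Lp E p (wMeasure p ω)) :
    evalCLM (𝕜 := 𝕜) hp hω j x = x j :=
  rfl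

lemma shift_pow_apply {ω : ℕ → ℝ} {B : Lp E p (wMeasure p ω) →L[𝕜] Lp E p (wMeasure p ω)}
    (hB : ∀ (x : Lp E p (wMeasure p ω)) (k : ℕ), B x k = x (k + 1))
    (m : ℕ) (x : Lp E p (wMeasure p ω)) (k : ℕ) : (B ^ m) x k = x (k + m) := by
  induction m generalizing x k with
  | zero => rfl
  | succ m ih =>
    rw [pow_succ', mul_apply_eq_comp, hB, ih, Nat.add_right_comm, add_assoc]

end WeightedLp

open WeightedLp in
theorem stmt1_general (p : ENNReal) [Fact (1 ≤ p)] (hp : p ≠ ∞) (ω : ℕ → ℝ) (hω : ∀ k, 0 < ω k)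
    (B : Lp ℂ p (wMeasure p ω) →L[ℂ] Lp ℂ p (wMeasure p ω))
    (hB : ∀ (x : Lp ℂ p (wMeasure p ω)) (k : ℕ), B x k = x (k + 1))
    (C : Set (Lp ℂ p (wMeasure p ω))) (hC : Bornology.IsBounded C)
    (n : ℕ → ℕ) (hn : StrictMono n) (x : ℕ → Lp ℂ p (wMeasure p ω)) (hx : ∀ k, x k ∈ C)
    (y : Lp ℂ p (wMeasure p ω)) (hy : y ≠ 0)
    (hweak : ∀ f : Lp ℂ p (wMeasure p ω) →L[ℂ] ℂ,
      Tendsto (fun k => f ((B ^ n k) (x k))) atTop (nhds (f y))) :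
    ∃ m : ℕ → ℕ, StrictMono m ∧ (∀ k, 0 < m k) ∧ ∃ M : ℝ, ∀ k, ω (m k) ≤ M := by
  obtain ⟨j, hj⟩ := exists_apply_ne_zero hω hy
  obtain ⟨R, hR⟩ := isBounded_iff_forall_norm_le.mp hC
  set c := ‖y j‖ / 2
  have hc : 0 < c := by positivity
  have hcoord : Tendsto (fun k => x k (j + n k)) atTop (𝓝 (y j)) := by
    simpa only [evalCLM_apply, shift_pow_apply hB] using hweak (evalCLM hp hω j)
  have hlarge : ∀ᶠ k in atTop, c ≤ ‖x k (j + n k)‖ :=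
    hcoord.norm.eventually (eventually_ge_nhds (half_lt_self (norm_pos_iff.mpr hj)))
  have hidx : Tendsto (fun k => j + n k) atTop atTop :=
    tendsto_atTop_mono (fun k ↦ Nat.le_add_left (n k) j) hn.tendsto_atTop
  have hgood : ∃ᶠ k in atTop, 0 < j + n k ∧ ω (j + n k) ≤ R / c :=
    ((hidx.eventually_gt_atTop 0).and (hlarge.mono fun k hk ↦
      weight_le_of_le_norm_apply hp hω hc hk (hR _ (hx k)))).frequently
  obtain ⟨m, hm, hmgood⟩ := extraction_of_frequently_atTop
    (hidx.frequently (p := fun i ↦ 0 < i ∧ ω i ≤ R / c) hgood)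
  exact ⟨m, hm, fun k ↦ (hmgood k).1, R / c, fun k ↦ (hmgood k).2⟩

theorem stmt1 (p : ENNReal) [Fact (1 ≤ p)] (hp : p ≠ ∞) (ω : ℕ → ℝ) (hω : ∀ k, 0 < ω k)
    (hbdd : ∃ C : ℝ, ∀ n, ω n / ω (n + 1) ≤ C)
    (B : Lp ℂ p (wMeasure p ω) →L[ℂ] Lp ℂ p (wMeasure p ω))
    (hB : ∀ (x : Lp ℂ p (wMeasure p ω)) (k : ℕ), B x k = x (k + 1))
    (C : Set (Lp ℂ p (wMeasure p ω))) (hC : Bornology.IsBounded C)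
    (n : ℕ → ℕ) (hn : StrictMono n) (x : ℕ → Lp ℂ p (wMeasure p ω)) (hx : ∀ k, x k ∈ C)
    (y : Lp ℂ p (wMeasure p ω)) (hy : y ≠ 0)
    (hweak : ∀ f : Lp ℂ p (wMeasure p ω) →L[ℂ] ℂ,
      Tendsto (fun k => f ((B ^ n k) (x k))) atTop (nhds (f y))) :
    ∃ m : ℕ → ℕ, StrictMono m ∧ (∀ k, 0 < m k) ∧ ∃ M : ℝ, ∀ k, ω (m k) ≤ M :=
  stmt1_general p hp ω hω B hB C hC n hn x hx y hy hweak
end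
end

section
/- Let ω = (ω_n) be a sequence of positive weights on ℕ with sup_n ω_n/ω_{n+1} < ∞, and let B be the backward shift on ℓ^p(ℕ, ω). If there exists a strictly increasing sequence (n_k) of positive integers with sup_k ω_{n_k} < ∞, then there exists a bounded subset C of ℓ^p(ℕ, ω) such that the orbit of C under B has a non-zero (norm) limit point. -/
/-! The backward shift sends the unit vector `e_{n_k}` to `e_0` in `n_k` steps, and
`‖e_{n_k}‖ ≤ max ω_{n_k} 1` stays bounded, so the constant orbit sequence `B^{n_k} e_{n_k} = e_0`
gives a non-zero limit point. Since every point has positive mass, elements of the weighted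
space are determined pointwise. -/

open MeasureTheory Filter Topology
open scoped ENNReal

noncomputable section

section WeightedSpace

variable {I : Type*} [MeasurableSpace I] [MeasurableSingletonClass I] (p : ℝ≥0∞)

lemma wMeasure_singleton (ω : I → ℝ) (j : I) : wMeasure p ω {j} = ENNReal.ofReal (ω j ^ p.toReal) := by
  rw [wMeasure, Measure.sum_apply _ (measurableSet_singleton j), tsum_eq_single j]
  · simp
  · intro k hk
    simp [Measure.dirac_apply' _ (measurableSet_singleton j), hk]

lemma eq_of_ae_wMeasure {ω : I → ℝ} (hω : ∀ k, 0 < ω k) {α : Type*} {f g : I → α}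
    (h : f =ᵐ[wMeasure p ω] g) : f = g := by
  have hae : ae (wMeasure p ω) = ⊤ := ae_eq_top.2 fun j => by
    simpa [wMeasure_singleton] using Real.rpow_pos_of_pos (hω j) p.toReal
  rw [EventuallyEq, hae, eventually_top] at h
  exact funext h

def wUnit (ω : I → ℝ) (j : I) : Lp ℂ p (wMeasure p ω) :=
  indicatorConstLp p (measurableSet_singleton j)
    (by simp [wMeasure_singleton]) (1 : ℂ)

lemma coeFn_wUnit {ω : I → ℝ} (hω : ∀ k, 0 < ω k) (j : I) :
    ⇑(wUnit p ω j) = Set.indicator {j} (fun _ => (1 : ℂ)) :=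
  eq_of_ae_wMeasure p hω indicatorConstLp_coeFn

lemma wUnit_ne_zero {ω : I → ℝ} (hω : ∀ k, 0 < ω k) (j : I) : wUnit p ω j ≠ 0 := by
  intro h
  have hj := congr_fun (coeFn_wUnit p hω j) j
  rw [h, eq_of_ae_wMeasure p hω (Lp.coeFn_zero ..)] at hj
  simp at hj

lemma norm_wUnit_le {ω : I → ℝ} (hω : ∀ k, 0 < ω k) (j : I) : ‖wUnit p ω j‖ ≤ max (ω j) 1 := by
  refine (norm_indicatorConstLp_le).trans ?_
  rw [norm_one, one_mul, measureReal_def, wMeasure_singleton,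
    ENNReal.toReal_ofReal (Real.rpow_pos_of_pos (hω j) _).le, ← Real.rpow_mul (hω j).le]
  -- `p = ∞` gives `p.toReal = 0`, and then the bound is `1` rather than `ω j`.
  by_cases h : p.toReal = 0 <;> simp [h]

end WeightedSpace

section BackwardShift

variable {p : ℝ≥0∞} [Fact (1 ≤ p)] {ω : ℕ → ℝ}
  {B : Lp ℂ p (wMeasure p ω) →L[ℂ] Lp ℂ p (wMeasure p ω)}

lemma pow_apply_of_shift (hB : ∀ (x : Lp ℂ p (wMeasure p ω)) (k : ℕ), B x k = x (k + 1))
    (m : ℕ) (x : Lp ℂ p (wMeasure p ω)) (i : ℕ) : (B ^ m) x i = x (i + m) := by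
  induction m generalizing x with
  | zero => rfl
  | succ m ih => rw [pow_succ, mul_apply_eq_comp, ih, hB, add_assoc]

lemma pow_wUnit_of_shift (hω : ∀ k, 0 < ω k)
    (hB : ∀ (x : Lp ℂ p (wMeasure p ω)) (k : ℕ), B x k = x (k + 1)) (i m : ℕ) :
    (B ^ m) (wUnit p ω (i + m)) = wUnit p ω i :=
  Lp.ext <| Eventually.of_forall fun l => by
    rw [pow_apply_of_shift hB, coeFn_wUnit p hω, coeFn_wUnit p hω]
    simp [Set.indicator]

end BackwardShift

theorem stmt2_general (p : ENNReal) [Fact (1 ≤ p)] (ω : ℕ → ℝ) (hω : ∀ k, 0 < ω k)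
    (B : Lp ℂ p (wMeasure p ω) →L[ℂ] Lp ℂ p (wMeasure p ω))
    (hB : ∀ (x : Lp ℂ p (wMeasure p ω)) (k : ℕ), B x k = x (k + 1))
    (n : ℕ → ℕ) (hn : StrictMono n)
    (M : ℝ) (hM : ∀ k, ω (n k) ≤ M) :
    ∃ C : Set (Lp ℂ p (wMeasure p ω)), Bornology.IsBounded C ∧
      ∃ m : ℕ → ℕ, StrictMono m ∧ ∃ x : ℕ → Lp ℂ p (wMeasure p ω), (∀ k, x k ∈ C) ∧
        ∃ y : Lp ℂ p (wMeasure p ω), y ≠ 0 ∧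
          Tendsto (fun k => (B ^ m k) (x k)) atTop (nhds y) := by
  refine ⟨Metric.closedBall 0 (max M 1), Metric.isBounded_closedBall, n, hn,
    fun k => wUnit p ω (n k), fun k => ?_, wUnit p ω 0, wUnit_ne_zero p hω 0, ?_⟩
  · rw [mem_closedBall_zero_iff]
    exact (norm_wUnit_le p hω _).trans (max_le_max_right 1 (hM k))
  · have hconst : ∀ k, (B ^ n k) (wUnit p ω (n k)) = wUnit p ω 0 := fun k => by
      simpa using pow_wUnit_of_shift hω hB 0 (n k)
    simp only [hconst, tendsto_const_nhds]

theorem stmt2 (p : ENNReal) [Fact (1 ≤ p)] (hp : p ≠ ∞) (ω : ℕ → ℝ) (hω : ∀ k, 0 < ω k)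
    (hbdd : ∃ C : ℝ, ∀ n, ω n / ω (n + 1) ≤ C)
    (B : Lp ℂ p (wMeasure p ω) →L[ℂ] Lp ℂ p (wMeasure p ω))
    (hB : ∀ (x : Lp ℂ p (wMeasure p ω)) (k : ℕ), B x k = x (k + 1))
    (n : ℕ → ℕ) (hn : StrictMono n) (hnpos : ∀ k, 0 < n k)
    (M : ℝ) (hM : ∀ k, ω (n k) ≤ M) :
    ∃ C : Set (Lp ℂ p (wMeasure p ω)), Bornology.IsBounded C ∧
      ∃ m : ℕ → ℕ, StrictMono m ∧ ∃ x : ℕ → Lp ℂ p (wMeasure p ω), (∀ k, x k ∈ C) ∧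
        ∃ y : Lp ℂ p (wMeasure p ω), y ≠ 0 ∧
          Tendsto (fun k => (B ^ m k) (x k)) atTop (nhds y) :=
  stmt2_general p ω hω B hB n hn M hM
end
end

section
/- Let B be the bilateral backward shift on ℓ^p(ℤ, ω) with sup_{n∈ℤ} ω_n/ω_{n+1} < ∞, and let Γ ⊂ ℂ with Γ \ {0} non-empty. If there exists x ∈ ℓ^p(ℤ, ω) such that Orb(Γx, B) = {λ B^n x : λ ∈ Γ, n ∈ ℕ} has a non-zero norm limit point, then B is Γ-supercyclic, i.e. there exists z ∈ ℓ^p(ℤ, ω) such that {λ B^n z : λ ∈ Γ, n ∈ ℕ} is dense in ℓ^p(ℤ, ω). -/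
/-!
Pick `j₀` with `y j₀ ≠ 0`. Read coordinatewise through `‖f j‖ * ω j ≤ ‖f‖`, the convergence
`λ_k • B^{n_k} x → y` gives `‖λ_k‖⁻¹ * ω (j₀ + n_k) → 0` (because `λ_k x_{j₀+n_k} → y_{j₀} ≠ 0`
while `‖x_{j₀+n_k}‖ * ω (j₀ + n_k) → 0`) and `‖λ_k‖ * ω (a - n_k) → 0` for every `a` with
`x_a ≠ 0` (because `‖y_{a-n_k}‖ * ω (a - n_k) → 0`). The bound `ω k ≤ C * ω (k + 1)` spreads these
to `‖λ_k‖ * ω (j - n_k) → 0` for all `j` and `‖λ_k‖⁻¹ * ω (j + n_k) → 0` for `j ≤ j₀`.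
For finitely supported `u`, `v` and `m_k = n_k - T` with `T` large, the vectors
`w_k = u + λ_k⁻¹ S^{m_k} v` (`S` the forward shift) then satisfy `w_k → u` and
`λ_k B^{m_k} w_k → v`. So the maps `λ_k B^m` are topologically transitive on the separable
space `ℓ^p(ℤ, ω)`, and Birkhoff's Baire category argument yields a dense orbit.
-/

open MeasureTheory Filter Topology
open scoped ENNReal

noncomputable section

theorem exists_dense_range_of_forall_exists_mem {ι Y : Type*} [Countable ι] [TopologicalSpace Y]
    [BaireSpace Y] [SecondCountableTopology Y] [Nonempty Y] (T : ι → Y → Y)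
    (hT : ∀ i, Continuous (T i))
    (htrans : ∀ U V : Set Y, IsOpen U → U.Nonempty → IsOpen V → V.Nonempty →
      ∃ i, ∃ u ∈ U, T i u ∈ V) :
    ∃ z, Dense (Set.range fun i => T i z) := by
  obtain ⟨b, hbc, hb_empty, hb⟩ := TopologicalSpace.exists_countable_basis Y
  have : Countable b := hbc.to_subtype
  have hG : Dense (⋂ V : b, ⋃ i, T i ⁻¹' V) := by
    refine dense_iInter_of_isOpen
      (fun V => isOpen_iUnion fun i => (hb.isOpen V.2).preimage (hT i)) fun V => ?_
    refine dense_iff_inter_open.2 fun U hU hU' => ?_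
    obtain ⟨i, u, hu, hTu⟩ :=
      htrans U V hU hU' (hb.isOpen V.2) (Set.nonempty_iff_ne_empty.2 fun h => hb_empty (h ▸ V.2))
    exact ⟨u, hu, Set.mem_iUnion.2 ⟨i, hTu⟩⟩
  obtain ⟨z, hz⟩ := hG.nonempty
  refine ⟨z, hb.dense_iff.2 fun V hV _ => ?_⟩
  obtain ⟨i, hi⟩ := Set.mem_iUnion.1 (Set.mem_iInter.1 hz ⟨V, hV⟩)
  exact ⟨T i z, hi, i, rfl⟩

namespace WeightedLp

variable {p : ℝ≥0∞} {ω : ℤ → ℝ}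

theorem weight_sub_le (hω : ∀ k, 0 < ω k) {C : ℝ} (hC : ∀ k, ω k ≤ C * ω (k + 1)) (b : ℤ) :
    ∀ d : ℕ, ω (b - d) ≤ C ^ d * ω b
  | 0 => by simp
  | d + 1 => by
    have hC0 : 0 ≤ C := by nlinarith [hC 0, hω 0, hω (0 + 1)]
    calc ω (b - (d + 1 : ℕ)) ≤ C * ω (b - d) := by
          simpa [sub_add_eq_sub_sub, sub_add_cancel] using hC (b - (d + 1 : ℕ))
      _ ≤ C * (C ^ d * ω b) := mul_le_mul_of_nonneg_left (weight_sub_le hω hC b d) hC0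
      _ = C ^ (d + 1) * ω b := by ring

theorem tendsto_mul_weight_add_of_le (hω : ∀ k, 0 < ω k) {C : ℝ}
    (hC : ∀ k, ω k ≤ C * ω (k + 1)) {α : Type*} {l : Filter α} {c : α → ℝ} (hc : ∀ a, 0 ≤ c a)
    {t : α → ℤ} {i j : ℤ} (hij : i ≤ j) (h : Tendsto (fun a => c a * ω (j + t a)) l (𝓝 0)) :
    Tendsto (fun a => c a * ω (i + t a)) l (𝓝 0) := by
  refine squeeze_zero (fun a => mul_nonneg (hc a) (hω _).le) (fun a => ?_)
    (by simpa using h.const_mul (C ^ (j - i).toNat))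
  have := weight_sub_le hω hC (j + t a) (j - i).toNat
  rw [Int.toNat_of_nonneg (by omega), show j + t a - (j - i) = i + t a by ring] at this
  calc c a * ω (i + t a) ≤ c a * (C ^ (j - i).toNat * ω (j + t a)) :=
        mul_le_mul_of_nonneg_left this (hc a)
    _ = _ := by ring

theorem exists_shift_tendsto {lam : ℕ → ℂ} {n : ℕ → ℕ} (hn : Tendsto n atTop atTop) {j₀ : ℤ}
    (h₁ : ∀ j, Tendsto (fun k => ‖lam k‖ * ω (j - n k)) atTop (𝓝 0))
    (h₂ : ∀ j ≤ j₀, Tendsto (fun k => ‖lam k‖⁻¹ * ω (j + n k)) atTop (𝓝 0)) (s : Finset ℤ) :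
    ∃ m : ℕ → ℕ, ∀ j ∈ s, Tendsto (fun k => ‖lam k‖ * ω (j - m k)) atTop (𝓝 0) ∧
      Tendsto (fun k => ‖lam k‖⁻¹ * ω (j + m k)) atTop (𝓝 0) := by
  obtain ⟨M, hM⟩ := s.bddAbove
  have hT := hn.eventually_ge_atTop (M - j₀).toNat
  refine ⟨fun k => n k - (M - j₀).toNat, fun j hj => ⟨?_, ?_⟩⟩
  · refine (h₁ (j + (M - j₀).toNat)).congr' (hT.mono fun k hk => ?_)
    simp only [Nat.cast_sub hk]
    ring_nf
  · have hjM : j ≤ M := hM hj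
    refine (h₂ (j - (M - j₀).toNat) (by omega)).congr' (hT.mono fun k hk => ?_)
    simp only [Nat.cast_sub hk]
    ring_nf

theorem wMeasure_singleton (k : ℤ) : wMeasure p ω {k} = ENNReal.ofReal (ω k ^ p.toReal) := by
  simp [wMeasure, Measure.sum_apply _ (measurableSet_singleton k), Pi.single_apply]

instance : SFinite (wMeasure p ω) := by
  unfold wMeasure; infer_instance

theorem ae_wMeasure_iff (hω : ∀ k, 0 < ω k) {P : ℤ → Prop} :
    (∀ᵐ k ∂wMeasure p ω, P k) ↔ ∀ k, P k := by
  simp [ae_iff_of_countable, wMeasure_singleton, Real.rpow_pos_of_pos (hω _)]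

theorem eLpNorm_wMeasure (hp0 : p ≠ 0) (hp : p ≠ ∞) (f : ℤ → ℂ) :
    eLpNorm f p (wMeasure p ω) =
      (∑' k, ‖f k‖ₑ ^ p.toReal * wMeasure p ω {k}) ^ (1 / p.toReal) := by
  rw [eLpNorm_eq_lintegral_rpow_enorm_toReal hp0 hp, lintegral_countable']

local notation "ℓᵖ" => Lp ℂ p (wMeasure p ω)

theorem sub_apply (hω : ∀ k, 0 < ω k) (f g : ℓᵖ) (k : ℤ) : (f - g) k = f k - g k :=
  (ae_wMeasure_iff hω).1 (Lp.coeFn_sub f g) k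

theorem smul_apply (hω : ∀ k, 0 < ω k) (c : ℂ) (f : ℓᵖ) (k : ℤ) : (c • f) k = c * f k :=
  (ae_wMeasure_iff hω).1 (Lp.coeFn_smul c f) k

theorem sum_apply (hω : ∀ k, 0 < ω k) {ι : Type*} (s : Finset ι) (f : ι → ℓᵖ) (k : ℤ) :
    (∑ i ∈ s, f i) k = ∑ i ∈ s, f i k := by
  classical
  induction s using Finset.induction with
  | empty => exact (ae_wMeasure_iff hω).1 (Lp.coeFn_zero ℂ p _) k
  | insert i s hi ih =>
    rw [Finset.sum_insert hi, Finset.sum_insert hi, ← ih]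
    exact (ae_wMeasure_iff hω).1 (Lp.coeFn_add _ _) k

theorem exists_apply_ne_zero_s13 (hω : ∀ k, 0 < ω k) {f : ℓᵖ} (hf : f ≠ 0) : ∃ j, f j ≠ 0 := by
  by_contra! h
  exact hf <| Lp.ext <| (ae_wMeasure_iff hω).2 fun k =>
    (h k).trans ((ae_wMeasure_iff hω).1 (Lp.coeFn_zero ℂ p _) k).symm

def single (j : ℤ) (c : ℂ) : ℓᵖ :=
  indicatorConstLp p (measurableSet_singleton j) (by simp [wMeasure_singleton]) c

theorem single_apply (hω : ∀ k, 0 < ω k) (j : ℤ) (c : ℂ) (k : ℤ) :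
    (single j c : ℓᵖ) k = if k = j then c else 0 := by
  have h : (single j c : ℓᵖ) =ᵐ[wMeasure p ω] ({j} : Set ℤ).indicator fun _ => c :=
    indicatorConstLp_coeFn
  simpa [Set.indicator_apply] using (ae_wMeasure_iff hω).1 h k

variable [Fact (1 ≤ p)]

theorem pow_apply {B : ℓᵖ →L[ℂ] ℓᵖ} (hB : ∀ (f : ℓᵖ) (k : ℤ), B f k = f (k + 1)) (m : ℕ)
    (f : ℓᵖ) (k : ℤ) : (B ^ m) f k = f (k + m) := by
  induction m generalizing f with
  | zero => simp
  | succ m ih => rw [pow_succ]; exact (ih (B f)).trans (by rw [hB]; push_cast; ring_nf)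

theorem norm_single (hω : ∀ k, 0 < ω k) (hp : p ≠ ∞) (j : ℤ) (c : ℂ) :
    ‖(single j c : ℓᵖ)‖ = ‖c‖ * ω j := by
  have hp0 : p ≠ 0 := (zero_lt_one.trans_le Fact.out).ne'
  rw [single, norm_indicatorConstLp hp0 hp, Measure.real, wMeasure_singleton,
    ENNReal.toReal_ofReal (Real.rpow_nonneg (hω j).le _), one_div,
    Real.rpow_rpow_inv (hω j).le (ENNReal.toReal_ne_zero.2 ⟨hp0, hp⟩)]

theorem pow_single (hω : ∀ k, 0 < ω k) {B : ℓᵖ →L[ℂ] ℓᵖ}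
    (hB : ∀ (f : ℓᵖ) (k : ℤ), B f k = f (k + 1)) (m : ℕ) (j : ℤ) (c : ℂ) :
    (B ^ m) (single j c) = single (j - m) c :=
  Lp.ext <| (ae_wMeasure_iff hω).2 fun k => by
    simp only [pow_apply hB, single_apply hω, eq_sub_iff_add_eq]

theorem norm_apply_mul_le (hω : ∀ k, 0 < ω k) (hp : p ≠ ∞) (f : ℓᵖ) (j : ℤ) :
    ‖f j‖ * ω j ≤ ‖f‖ := by
  rw [← norm_single hω hp]
  refine Lp.norm_le_norm_of_ae_le ((ae_wMeasure_iff hω).2 fun k => ?_)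
  rw [single_apply hω]
  split_ifs with h
  · rw [h]
  · simp

theorem norm_sum_single_le (hω : ∀ k, 0 < ω k) (hp : p ≠ ∞) (s : Finset ℤ) (g : ℤ → ℤ)
    (c : ℤ → ℂ) : ‖∑ j ∈ s, (single (g j) (c j) : ℓᵖ)‖ ≤ ∑ j ∈ s, ‖c j‖ * ω (g j) :=
  (norm_sum_le _ _).trans_eq (Finset.sum_congr rfl fun _ _ => norm_single hω hp _ _)

theorem hasSum_single (hω : ∀ k, 0 < ω k) (hp : p ≠ ∞) (f : ℓᵖ) :
    HasSum (fun j => single j (f j)) f := by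
  have hp0 : p ≠ 0 := (zero_lt_one.trans_le Fact.out).ne'
  have hpos : 0 < 1 / p.toReal := one_div_pos.2 (ENNReal.toReal_pos hp0 hp)
  set g : ℤ → ℝ≥0∞ := fun k => ‖f k‖ₑ ^ p.toReal * wMeasure p ω {k}
  have hg : ∑' k, g k ≠ ∞ := by
    have := Lp.eLpNorm_ne_top f
    rwa [eLpNorm_wMeasure hp0 hp, Ne, ENNReal.rpow_eq_top_iff_of_pos hpos] at this
  have hnorm : ∀ s : Finset ℤ, ‖∑ j ∈ s, single j (f j) - f‖ =
      ((∑' k : {k // k ∉ s}, g k) ^ (1 / p.toReal)).toReal := by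
    intro s
    rw [Lp.norm_def, eLpNorm_wMeasure hp0 hp]
    erw [tsum_subtype {k | k ∉ s} g]
    congr 3 with k
    rw [sub_apply hω, sum_apply hω]
    by_cases hk : k ∈ s <;>
      simp [g, hk, single_apply hω, ENNReal.zero_rpow_of_pos, ENNReal.toReal_pos hp0 hp]
  have htail := (((ENNReal.continuous_rpow_const (y := 1 / p.toReal)).tendsto 0).comp
    (ENNReal.tendsto_tsum_compl_atTop_zero hg))
  rw [ENNReal.zero_rpow_of_pos hpos] at htail
  show Tendsto (fun s : Finset ℤ => ∑ j ∈ s, single j (f j)) atTop (𝓝 f)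
  rw [tendsto_iff_norm_sub_tendsto_zero]
  refine (tendsto_congr hnorm).2 ?_
  simpa [Function.comp_def] using (ENNReal.tendsto_toReal ENNReal.zero_ne_top).comp htail

theorem tendsto_norm_apply_mul_cofinite (hω : ∀ k, 0 < ω k) (hp : p ≠ ∞) (f : ℓᵖ) :
    Tendsto (fun j => ‖f j‖ * ω j) cofinite (𝓝 0) := by
  simpa [norm_single hω hp] using (hasSum_single hω hp f).summable.tendsto_cofinite_zero.norm

theorem tendsto_smul_sum_single_zero (hω : ∀ k, 0 < ω k) (hp : p ≠ ∞) {α : Type*}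
    {l : Filter α} {μ : α → ℂ} {g : α → ℤ → ℤ} (s : Finset ℤ) (c : ℤ → ℂ)
    (h : ∀ j ∈ s, Tendsto (fun a => ‖μ a‖ * ω (g a j)) l (𝓝 0)) :
    Tendsto (fun a => μ a • ∑ j ∈ s, (single (g a j) (c j) : ℓᵖ)) l (𝓝 0) := by
  refine squeeze_zero_norm (fun a => ?_)
    (by simpa using tendsto_finsetSum s fun j hj => (h j hj).const_mul ‖c j‖)
  rw [norm_smul]
  refine (mul_le_mul_of_nonneg_left (norm_sum_single_le hω hp s _ c) (norm_nonneg _)).trans_eq ?_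
  rw [Finset.mul_sum]
  exact Finset.sum_congr rfl fun j _ => by ring

theorem exists_smul_pow_mem (hω : ∀ k, 0 < ω k) (hp : p ≠ ∞) {B : ℓᵖ →L[ℂ] ℓᵖ}
    (hB : ∀ (f : ℓᵖ) (k : ℤ), B f k = f (k + 1)) {lam : ℕ → ℂ}
    (hlam : ∀ᶠ k in atTop, lam k ≠ 0)
    (hweight : ∀ s : Finset ℤ, ∃ m : ℕ → ℕ, ∀ j ∈ s,
      Tendsto (fun k => ‖lam k‖ * ω (j - m k)) atTop (𝓝 0) ∧
      Tendsto (fun k => ‖lam k‖⁻¹ * ω (j + m k)) atTop (𝓝 0))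
    {U V : Set ℓᵖ} (hU : IsOpen U) (hU' : U.Nonempty) (hV : IsOpen V) (hV' : V.Nonempty) :
    ∃ k m : ℕ, ∃ w ∈ U, lam k • (B ^ m) w ∈ V := by
  obtain ⟨u, hu⟩ := hU'
  obtain ⟨v, hv⟩ := hV'
  obtain ⟨s, hsU, hsV⟩ : ∃ s : Finset ℤ,
      ∑ j ∈ s, single j (u j) ∈ U ∧ ∑ j ∈ s, single j (v j) ∈ V :=
    ((Tendsto.eventually (hasSum_single hω hp u) (hU.mem_nhds hu)).and
      (Tendsto.eventually (hasSum_single hω hp v) (hV.mem_nhds hv))).exists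
  obtain ⟨m, hm⟩ := hweight s
  -- `w k` is `u` plus a small forward shift of `v`, which `lam k • B ^ m k` brings back onto `v`.
  set w : ℕ → ℓᵖ := fun k =>
    ∑ j ∈ s, single j (u j) + (lam k)⁻¹ • ∑ j ∈ s, single (j + m k) (v j)
  have hw : Tendsto w atTop (𝓝 (∑ j ∈ s, single j (u j))) := by
    simpa using tendsto_const_nhds.add (tendsto_smul_sum_single_zero hω hp s v
      fun j hj => by simpa only [norm_inv] using (hm j hj).2)
  have hTw : Tendsto (fun k => lam k • (B ^ m k) (w k)) atTop
      (𝓝 (∑ j ∈ s, single j (v j))) := by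
    have h := (tendsto_smul_sum_single_zero hω hp s u fun j hj => (hm j hj).1).add
      (tendsto_const_nhds : Tendsto (fun _ => ∑ j ∈ s, single j (v j)) atTop _)
    rw [zero_add] at h
    refine h.congr' (hlam.mono fun k hk => ?_)
    simp only [w, map_add, map_smul, map_sum, pow_single hω hB, smul_add, smul_smul,
      mul_inv_cancel₀ hk, one_smul, add_sub_cancel_right]
  obtain ⟨k, hkU, hkV⟩ := ((hw.eventually (hU.mem_nhds hsU)).and
    (hTw.eventually (hV.mem_nhds hsV))).exists
  exact ⟨k, m k, w k, hkU, hkV⟩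

theorem tendsto_norm_mul_apply_sub_mul_weight (hω : ∀ k, 0 < ω k) (hp : p ≠ ∞)
    {B : ℓᵖ →L[ℂ] ℓᵖ} (hB : ∀ (f : ℓᵖ) (k : ℤ), B f k = f (k + 1)) {x y : ℓᵖ} {lam : ℕ → ℂ}
    {n : ℕ → ℕ} (hconv : Tendsto (fun k => lam k • (B ^ n k) x) atTop (𝓝 y)) (i : ℕ → ℤ) :
    Tendsto (fun k => ‖lam k * x (i k + n k) - y (i k)‖ * ω (i k)) atTop (𝓝 0) :=
  squeeze_zero (fun k => by positivity [hω (i k)])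
    (fun k => by
      rw [← pow_apply hB, ← smul_apply hω, ← sub_apply hω]
      exact norm_apply_mul_le hω hp _ _)
    (tendsto_iff_norm_sub_tendsto_zero.1 hconv)

theorem tendsto_mul_apply (hω : ∀ k, 0 < ω k) (hp : p ≠ ∞)
    {B : ℓᵖ →L[ℂ] ℓᵖ} (hB : ∀ (f : ℓᵖ) (k : ℤ), B f k = f (k + 1)) {x y : ℓᵖ} {lam : ℕ → ℂ}
    {n : ℕ → ℕ} (hconv : Tendsto (fun k => lam k • (B ^ n k) x) atTop (𝓝 y)) (j : ℤ) :
    Tendsto (fun k => lam k * x (j + n k)) atTop (𝓝 (y j)) := by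
  rw [tendsto_iff_norm_sub_tendsto_zero]
  simpa [(hω j).ne'] using
    (tendsto_norm_mul_apply_sub_mul_weight hω hp hB hconv fun _ => j).div_const (ω j)

theorem tendsto_inv_norm_mul_weight (hω : ∀ k, 0 < ω k) (hp : p ≠ ∞)
    {B : ℓᵖ →L[ℂ] ℓᵖ} (hB : ∀ (f : ℓᵖ) (k : ℤ), B f k = f (k + 1)) {x y : ℓᵖ} {lam : ℕ → ℂ}
    {n : ℕ → ℕ} (hconv : Tendsto (fun k => lam k • (B ^ n k) x) atTop (𝓝 y))
    (hn : Tendsto n atTop atTop) {j₀ : ℤ} (hj₀ : y j₀ ≠ 0) :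
    Tendsto (fun k => ‖lam k‖⁻¹ * ω (j₀ + n k)) atTop (𝓝 0) := by
  have hlim := tendsto_mul_apply hω hp hB hconv j₀
  have hdecay : Tendsto (fun k => ‖x (j₀ + n k)‖ * ω (j₀ + n k)) atTop (𝓝 0) :=
    (tendsto_norm_apply_mul_cofinite hω hp x).comp <| atTop_le_cofinite.trans' <|
      tendsto_atTop_add_const_left _ j₀ (tendsto_natCast_atTop_atTop.comp hn)
  have h := (hlim.norm.inv₀ (norm_ne_zero_iff.2 hj₀)).mul hdecay
  rw [mul_zero] at h
  -- `‖λ_k‖⁻¹ = ‖λ_k x_{j₀ + n_k}‖⁻¹ ‖x_{j₀ + n_k}‖`, and the first factor stays bounded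
  refine h.congr' ((hlim.eventually_ne hj₀).mono fun k hk => ?_)
  have hx : x (j₀ + n k) ≠ 0 := right_ne_zero_of_mul hk
  simp only [norm_mul, mul_inv]
  field_simp

theorem tendsto_norm_mul_weight_sub (hω : ∀ k, 0 < ω k) (hp : p ≠ ∞) {C : ℝ}
    (hC : ∀ k, ω k ≤ C * ω (k + 1)) {B : ℓᵖ →L[ℂ] ℓᵖ}
    (hB : ∀ (f : ℓᵖ) (k : ℤ), B f k = f (k + 1)) {x y : ℓᵖ} {lam : ℕ → ℂ} {n : ℕ → ℕ}
    (hconv : Tendsto (fun k => lam k • (B ^ n k) x) atTop (𝓝 y))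
    (hn : Tendsto n atTop atTop) {j₀ : ℤ} (hj₀ : y j₀ ≠ 0) (j : ℤ) :
    Tendsto (fun k => ‖lam k‖ * ω (j - n k)) atTop (𝓝 0) := by
  have hnZ : Tendsto (fun k => (n k : ℤ)) atTop atTop := tendsto_natCast_atTop_atTop.comp hn
  obtain ⟨k₀, hk₀, hjk₀⟩ : ∃ k₀, lam k₀ * x (j₀ + n k₀) ≠ 0 ∧ j ≤ j₀ + n k₀ :=
    (((tendsto_mul_apply hω hp hB hconv j₀).eventually_ne hj₀).and
      ((tendsto_atTop_add_const_left _ j₀ hnZ).eventually_ge_atTop j)).exists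
  set a := j₀ + (n k₀ : ℤ)
  have hxa : x a ≠ 0 := right_ne_zero_of_mul hk₀
  -- At coordinate `a - n_k`, `λ_k • B^{n_k} x` has entry `λ_k x_a` while `y` is small there.
  have herr := tendsto_norm_mul_apply_sub_mul_weight hω hp hB hconv fun k => a - n k
  simp only [sub_add_cancel] at herr
  have hdecay : Tendsto (fun k => ‖y (a - n k)‖ * ω (a - n k)) atTop (𝓝 0) :=
    (tendsto_norm_apply_mul_cofinite hω hp y).comp <| atBot_le_cofinite.trans' <|
      tendsto_atBot_add_const_left _ a (tendsto_neg_atTop_atBot.comp hnZ)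
  have hxa_mul : Tendsto (fun k => ‖x a‖ * (‖lam k‖ * ω (a + -(n k : ℤ)))) atTop (𝓝 0) := by
    refine squeeze_zero (fun k => by positivity [hω (a + -(n k : ℤ))]) (fun k => ?_)
      (by simpa using herr.add hdecay)
    rw [← sub_eq_add_neg, ← mul_assoc, mul_comm ‖x a‖, ← norm_mul, ← add_mul]
    exact mul_le_mul_of_nonneg_right (norm_le_norm_sub_add _ _) (hω _).le
  have hlam : Tendsto (fun k => ‖lam k‖ * ω (a + -(n k : ℤ))) atTop (𝓝 0) := by
    simpa [hxa] using hxa_mul.const_mul ‖x a‖⁻¹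
  simpa only [← sub_eq_add_neg] using
    tendsto_mul_weight_add_of_le hω hC (fun _ => norm_nonneg _) hjk₀ hlam

theorem tendsto_inv_norm_mul_weight_add (hω : ∀ k, 0 < ω k) (hp : p ≠ ∞) {C : ℝ}
    (hC : ∀ k, ω k ≤ C * ω (k + 1)) {B : ℓᵖ →L[ℂ] ℓᵖ}
    (hB : ∀ (f : ℓᵖ) (k : ℤ), B f k = f (k + 1)) {x y : ℓᵖ} {lam : ℕ → ℂ} {n : ℕ → ℕ}
    (hconv : Tendsto (fun k => lam k • (B ^ n k) x) atTop (𝓝 y))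
    (hn : Tendsto n atTop atTop) {j₀ : ℤ} (hj₀ : y j₀ ≠ 0) {j : ℤ} (hj : j ≤ j₀) :
    Tendsto (fun k => ‖lam k‖⁻¹ * ω (j + n k)) atTop (𝓝 0) :=
  tendsto_mul_weight_add_of_le hω hC (fun _ => inv_nonneg.2 (norm_nonneg _)) hj
    (tendsto_inv_norm_mul_weight hω hp hB hconv hn hj₀)

end WeightedLp

open WeightedLp in
theorem stmt13_general (p : ENNReal) [Fact (1 ≤ p)] (hp : p ≠ ∞) (ω : ℤ → ℝ) (hω : ∀ k, 0 < ω k)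
    (hbdd : ∃ C : ℝ, ∀ k : ℤ, ω k / ω (k + 1) ≤ C)
    (B : Lp ℂ p (wMeasure p ω) →L[ℂ] Lp ℂ p (wMeasure p ω))
    (hB : ∀ (x : Lp ℂ p (wMeasure p ω)) (k : ℤ), B x k = x (k + 1))
    (Γ : Set ℂ)
    (x : Lp ℂ p (wMeasure p ω))
    (lam : ℕ → ℂ) (hlam : ∀ k, lam k ∈ Γ)
    (n : ℕ → ℕ) (hn : StrictMono n)
    (y : Lp ℂ p (wMeasure p ω)) (hy : y ≠ 0)
    (hconv : Tendsto (fun k => lam k • (B ^ n k) x) atTop (nhds y)) :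
    ∃ z : Lp ℂ p (wMeasure p ω),
      Dense {w : Lp ℂ p (wMeasure p ω) | ∃ γ ∈ Γ, ∃ m : ℕ, w = γ • (B ^ m) z} := by
  obtain ⟨C, hC⟩ := hbdd
  have hCω : ∀ k, ω k ≤ C * ω (k + 1) := fun k => (div_le_iff₀ (hω _)).1 (hC k)
  have hn' := hn.tendsto_atTop
  obtain ⟨j₀, hj₀⟩ := exists_apply_ne_zero_s13 hω hy
  have hlam₀ : ∀ᶠ k in atTop, lam k ≠ 0 :=
    ((tendsto_mul_apply hω hp hB hconv j₀).eventually_ne hj₀).mono fun _ => left_ne_zero_of_mul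
  have hweight := exists_shift_tendsto hn' (tendsto_norm_mul_weight_sub hω hp hCω hB hconv hn' hj₀)
    fun _ => tendsto_inv_norm_mul_weight_add hω hp hCω hB hconv hn' hj₀
  have : Fact (p ≠ ∞) := ⟨hp⟩
  obtain ⟨z, hz⟩ := exists_dense_range_of_forall_exists_mem
    (fun (km : ℕ × ℕ) w => lam km.1 • (B ^ km.2) w)
    (fun km => by fun_prop) fun U V hU hU' hV hV' => by
      obtain ⟨k, m, w, hw, hTw⟩ := exists_smul_pow_mem hω hp hB hlam₀ hweight hU hU' hV hV'
      exact ⟨(k, m), w, hw, hTw⟩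
  refine ⟨z, hz.mono ?_⟩
  rintro _ ⟨km, rfl⟩
  exact ⟨lam km.1, hlam _, km.2, rfl⟩

/-- if for some `x` the orbit `{λ • B ^ n x : λ ∈ Γ, n ∈ ℕ}` under the
bilateral backward shift has a non-zero norm limit point, then `B` is `Γ`-supercyclic. -/
theorem stmt13 (p : ENNReal) [Fact (1 ≤ p)] (hp : p ≠ ∞) (ω : ℤ → ℝ) (hω : ∀ k, 0 < ω k)
    (hbdd : ∃ C : ℝ, ∀ k : ℤ, ω k / ω (k + 1) ≤ C)
    (B : Lp ℂ p (wMeasure p ω) →L[ℂ] Lp ℂ p (wMeasure p ω))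
    (hB : ∀ (x : Lp ℂ p (wMeasure p ω)) (k : ℤ), B x k = x (k + 1))
    (Γ : Set ℂ) (hΓ : (Γ \ {0}).Nonempty)
    (x : Lp ℂ p (wMeasure p ω))
    (lam : ℕ → ℂ) (hlam : ∀ k, lam k ∈ Γ)
    (n : ℕ → ℕ) (hn : StrictMono n)
    (y : Lp ℂ p (wMeasure p ω)) (hy : y ≠ 0)
    (hconv : Tendsto (fun k => lam k • (B ^ n k) x) atTop (nhds y)) :
    ∃ z : Lp ℂ p (wMeasure p ω),
      Dense {w : Lp ℂ p (wMeasure p ω) | ∃ γ ∈ Γ, ∃ m : ℕ, w = γ • (B ^ m) z} :=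
  stmt13_general p hp ω hω hbdd B hB Γ x lam hlam n hn y hy hconv
end
end
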